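/- arXiv:math/0402095 — 2 statements merged into one kernel-verified Lean document; each statement's English description precedes it below -/
import Mathlib

section
/- Let K be a field, E a K-vector space of finite dimension N+1, w a weight function on E, and l_0, …, l_N a basis of E adapted to w. Then for every nonzero x ∈ E, writing x = x_0 l_0 + ⋯ + x_N l_N, one has w(x) = max{ w(l_j) : 0 ≤ j ≤ N, x_j ≠ 0 }. -/
/-- A weight function on a `K`-vector space `E` is a map `w : E → ℝ ∪ {−∞}` such that
(1) `w x = −∞` iff `x = 0`; (2) `w (t • x) = w x` for all nonzero `t : K`;
(3) `w (x + y) ≤ max (w x) (w y)`. -/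
def IsWeightFunction (K : Type*) [Field K] {E : Type*} [AddCommGroup E] [Module K E]
    (w : E → WithBot ℝ) : Prop :=
  (∀ x : E, w x = ⊥ ↔ x = 0) ∧
  (∀ (t : K) (x : E), t ≠ 0 → w (t • x) = w x) ∧
  (∀ x y : E, w (x + y) ≤ max (w x) (w y))

/-- A basis `b` of `E` is adapted to the weight function `w` if for every `α ∈ ℝ`, the
sublevel subspace `F^α = {x ∈ E : w x ≤ α}` equals the span of `{b j : w (b j) ≤ α}`. -/
def IsAdaptedBasis (K : Type*) [Field K] {E : Type*} [AddCommGroup E] [Module K E]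
    {ι : Type*} (w : E → WithBot ℝ) (b : Module.Basis ι K E) : Prop :=
  ∀ α : ℝ, {x : E | w x ≤ (α : WithBot ℝ)} =
    ↑(Submodule.span K (b '' {j : ι | w (b j) ≤ (α : WithBot ℝ)}))

/-!
The ultrametric inequality bounds `w x` by the largest weight `w (b j)` occurring in the
expansion of `x`. Conversely, `x` lies in the sublevel subspace `F^{w x}`, which for an adapted
basis is spanned by the `b j` of weight at most `w x`; so every `b j` occurring in `x` has
weight at most `w x`.
-/

namespace IsWeightFunction

variable {K E : Type*} [Field K] [AddCommGroup E] [Module K E] {w : E → WithBot ℝ}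

theorem map_zero (hw : IsWeightFunction K w) : w 0 = ⊥ :=
  (hw.1 0).2 rfl

theorem map_sum_le (hw : IsWeightFunction K w) {ι : Type*} (s : Finset ι) (f : ι → E) :
    w (∑ j ∈ s, f j) ≤ s.sup fun j => w (f j) := by
  classical
  induction s using Finset.induction with
  | empty => simp [hw.map_zero]
  | insert a s ha ih =>
    rw [Finset.sum_insert ha, Finset.sup_insert]
    exact (hw.2.2 _ _).trans (max_le_max le_rfl ih)

theorem le_sup_support_repr (hw : IsWeightFunction K w) {ι : Type*} (b : Module.Basis ι K E)
    (x : E) : w x ≤ (b.repr x).support.sup fun j => w (b j) := by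
  conv_lhs => rw [← b.linearCombination_repr x, Finsupp.linearCombination_apply]
  refine (hw.map_sum_le _ _).trans (Finset.sup_mono_fun fun j hj => ?_)
  exact (hw.2.1 _ _ (Finsupp.mem_support_iff.1 hj)).le

theorem weight_le_of_mem_support_repr (hw : IsWeightFunction K w) {ι : Type*}
    {b : Module.Basis ι K E} (hb : IsAdaptedBasis K w b) {x : E} {j : ι}
    (hj : j ∈ (b.repr x).support) : w (b j) ≤ w x := by
  have hx_ne_bot : w x ≠ ⊥ := fun hbot => by simp [(hw.1 x).1 hbot] at hj
  obtain ⟨α, hα⟩ := WithBot.ne_bot_iff_exists.1 hx_ne_bot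
  have hx : x ∈ Submodule.span K (b '' {j | w (b j) ≤ α}) := by
    rw [← SetLike.mem_coe, ← hb α]
    exact hα.ge
  rw [← hα]
  exact b.mem_span_image.1 hx hj

theorem eq_sup_support_repr (hw : IsWeightFunction K w) {ι : Type*}
    {b : Module.Basis ι K E} (hb : IsAdaptedBasis K w b) (x : E) :
    w x = (b.repr x).support.sup fun j => w (b j) :=
  (hw.le_sup_support_repr b x).antisymm
    (Finset.sup_le fun _ hj => hw.weight_le_of_mem_support_repr hb hj)

end IsWeightFunction

open Classical in
theorem weight_eq_max_of_adapted_basis_general (K : Type*) [Field K] (E : Type*) [AddCommGroup E]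
    [Module K E] (N : ℕ) (w : E → WithBot ℝ) (hw : IsWeightFunction K w)
    (b : Module.Basis (Fin (N + 1)) K E) (hb : IsAdaptedBasis K w b) (x : E) :
    w x = (Finset.univ.filter fun j : Fin (N + 1) => b.repr x j ≠ 0).sup
      fun j => w (b j) := by
  have hsupport : Finset.univ.filter (fun j => b.repr x j ≠ 0) = (b.repr x).support := by
    ext j
    simp
  rw [hsupport]
  exact hw.eq_sup_support_repr hb x

open Classical in
/-- If `b` is a basis adapted to the weight function `w`, then for every nonzero `x`,
`w x` is the maximum of the weights `w (b j)` over the indices `j` where the coordinate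
of `x` is nonzero. -/
theorem weight_eq_max_of_adapted_basis (K : Type*) [Field K] (E : Type*) [AddCommGroup E]
    [Module K E] (N : ℕ) (w : E → WithBot ℝ) (hw : IsWeightFunction K w)
    (b : Module.Basis (Fin (N + 1)) K E) (hb : IsAdaptedBasis K w b) (x : E) (hx : x ≠ 0) :
    w x = (Finset.univ.filter fun j : Fin (N + 1) => b.repr x j ≠ 0).sup
      fun j => w (b j) :=
  weight_eq_max_of_adapted_basis_general K E N w hw b hb x
end

section
/- Let K be a field, E a nonzero finite-dimensional K-vector space, and w a weight function on E with w(x) ≥ 0 for every nonzero x ∈ E. Then for every ε > 0 there exist a positive integer m and a weight function w̃ on E taking only integer values on nonzero vectors, such that (i) for all nonzero x, y ∈ E one has w(x) ≤ w(y) if and only if w̃(x) ≤ w̃(y) (so w and w̃ have the same sublevel filtration), and (ii) m·w(x) ≤ w̃(x) ≤ m(1+ε)·w(x) for every nonzero x ∈ E. -/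
section Aux

variable {K : Type*} [Field K] {E : Type*} [AddCommGroup E] [Module K E]

lemma weight_sum_le (w : E → WithBot ℝ) (hw : IsWeightFunction K w)
    {ι : Type*} (s : Finset ι) (f : ι → E) :
    w (∑ i ∈ s, f i) ≤ s.sup fun i => w (f i) := by
  classical
  induction s using Finset.cons_induction with
  | empty => simp [(hw.1 0).2 rfl]
  | cons a s ha ih =>
    rw [Finset.sum_cons, Finset.sup_cons]
    exact le_trans (hw.2.2 _ _) (max_le_max le_rfl ih)

lemma weight_values_finite [FiniteDimensional K E]
    (w : E → WithBot ℝ) (hw : IsWeightFunction K w) :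
    {r : ℝ | ∃ x : E, x ≠ 0 ∧ w x = (r : WithBot ℝ)}.Finite := by
  classical
  set S := {r : ℝ | ∃ x : E, x ≠ 0 ∧ w x = (r : WithBot ℝ)} with hSdef
  rw [← Set.finite_coe_iff]
  choose f hf0 hfw using fun s : S => s.2
  have hli : LinearIndependent K f := by
    rw [linearIndependent_iff']
    intro s g hsum i hi
    by_contra hgi
    set t := s.filter fun j => g j ≠ 0 with ht
    have hit : i ∈ t := Finset.mem_filter.2 ⟨hi, hgi⟩
    have htne : t.Nonempty := ⟨i, hit⟩
    set j := t.max' htne with hj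
    have hjt : j ∈ t := t.max'_mem htne
    have hgj : g j ≠ 0 := (Finset.mem_filter.1 hjt).2
    have hsum' : ∑ k ∈ t, g k • f k = 0 := by
      rw [ht, Finset.sum_filter_of_ne, hsum]
      intro k _ hk hgk
      exact hk (by rw [hgk, zero_smul])
    have heq : g j • f j = -∑ k ∈ t.erase j, g k • f k := by
      have := Finset.add_sum_erase t (fun k => g k • f k) hjt
      rw [hsum'] at this
      linear_combination (norm := module) this
    have hne1 : ((-1 : K)) ≠ 0 := neg_ne_zero.2 one_ne_zero
    have hwj : w (g j • f j) = ((j : ℝ) : WithBot ℝ) := by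
      rw [hw.2.1 (g j) (f j) hgj, hfw j]
    have hlt : w (g j • f j) < ((j : ℝ) : WithBot ℝ) := by
      have h1 : w (g j • f j) = w (∑ k ∈ t.erase j, g k • f k) := by
        rw [heq, ← neg_one_smul K (∑ k ∈ t.erase j, g k • f k), hw.2.1 _ _ hne1]
      rw [h1]
      refine lt_of_le_of_lt (weight_sum_le w hw _ _) ?_
      rw [Finset.sup_lt_iff (by exact WithBot.bot_lt_coe _)]
      intro k hk
      have hkj : k ≠ j := (Finset.mem_erase.1 hk).1
      have hkt : k ∈ t := (Finset.mem_erase.1 hk).2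
      have hklt : (k : ℝ) < (j : ℝ) :=
        lt_of_le_of_ne (Finset.le_max' t k hkt) (fun h => hkj (Subtype.coe_injective h))
      have hgk : g k ≠ 0 := (Finset.mem_filter.1 hkt).2
      rw [hw.2.1 (g k) (f k) hgk, hfw k]
      exact_mod_cast hklt
    rw [hwj] at hlt
    exact lt_irrefl _ hlt
  exact hli.finite

end Aux

/-- A nonnegative weight function on a nonzero finite-dimensional space can be
approximated, after scaling by a suitable positive integer `m`, by an integer-valued
weight function `w̃` with the same sublevel filtration, with
`m·w(x) ≤ w̃(x) ≤ m(1+ε)·w(x)` on nonzero vectors. -/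
theorem exists_integer_valued_approximation (K : Type*) [Field K] (E : Type*)
    [AddCommGroup E] [Module K E] [FiniteDimensional K E] [Nontrivial E]
    (w : E → WithBot ℝ) (hw : IsWeightFunction K w)
    (hnonneg : ∀ x : E, x ≠ 0 → (0 : WithBot ℝ) ≤ w x) (ε : ℝ) (hε : 0 < ε) :
    ∃ m : ℕ, 0 < m ∧ ∃ w' : E → WithBot ℝ, IsWeightFunction K w' ∧
      (∀ x y : E, x ≠ 0 → y ≠ 0 → (w x ≤ w y ↔ w' x ≤ w' y)) ∧
      (∀ x : E, x ≠ 0 → ∃ (r : ℝ) (n : ℤ), w x = (r : WithBot ℝ) ∧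
        w' x = ((n : ℝ) : WithBot ℝ) ∧
        (m : ℝ) * r ≤ (n : ℝ) ∧ (n : ℝ) ≤ (m : ℝ) * (1 + ε) * r) := by
  classical
  set S := {r : ℝ | ∃ x : E, x ≠ 0 ∧ w x = (r : WithBot ℝ)} with hSdef
  have hSfin : S.Finite := weight_values_finite w hw
  have hval : ∀ x : E, x ≠ 0 → ∃ r : ℝ, w x = (r : WithBot ℝ) ∧ r ∈ S ∧ 0 ≤ r := by
    intro x hx
    obtain ⟨r, hr⟩ : ∃ r : ℝ, w x = (r : WithBot ℝ) := by
      cases hwx : w x with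
      | bot => exact absurd ((hw.1 x).1 hwx) hx
      | coe r => exact ⟨r, rfl⟩
    refine ⟨r, hr, ⟨x, hx, hr⟩, ?_⟩
    have h := hnonneg x hx
    rw [hr] at h
    exact_mod_cast h
  set T : Set ℝ := ((fun p : ℝ × ℝ => 1 / (p.2 - p.1)) '' (S ×ˢ S)) ∪
      ((fun r => 1 / (ε * r)) '' S) with hTdef
  have hTfin : T.Finite := ((hSfin.prod hSfin).image _).union (hSfin.image _)
  obtain ⟨C, hC⟩ := hTfin.bddAbove
  obtain ⟨m, hm⟩ := exists_nat_gt (max C 0)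
  have hm0 : (0 : ℝ) < m := lt_of_le_of_lt (le_max_right _ _) hm
  have hmpos : 0 < m := by exact_mod_cast hm0
  have hCm : C < (m : ℝ) := lt_of_le_of_lt (le_max_left _ _) hm
  have hgap : ∀ r ∈ S, ∀ s ∈ S, r < s → 1 < (m : ℝ) * (s - r) := by
    intro r hr s hs hrs
    have h1 : 1 / (s - r) ≤ C := hC (Or.inl ⟨(r, s), ⟨hr, hs⟩, rfl⟩)
    have h2 : (0 : ℝ) < s - r := sub_pos.2 hrs
    have h3 : 1 / (s - r) < (m : ℝ) := lt_of_le_of_lt h1 hCm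
    rw [div_lt_iff₀ h2] at h3
    linarith
  have hposS : ∀ r ∈ S, 0 < r → 1 < (m : ℝ) * ε * r := by
    intro r hr hr0
    have h1 : 1 / (ε * r) ≤ C := hC (Or.inr ⟨r, hr, rfl⟩)
    have h2 : (0 : ℝ) < ε * r := mul_pos hε hr0
    have h3 : 1 / (ε * r) < (m : ℝ) := lt_of_le_of_lt h1 hCm
    rw [div_lt_iff₀ h2] at h3
    nlinarith
  set g : ℝ → ℝ := fun r => ((⌈(m : ℝ) * r⌉ : ℤ) : ℝ) with hgdef
  have hgmono : Monotone g := by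
    intro a b hab
    simp only [hgdef]
    exact_mod_cast Int.ceil_le_ceil (mul_le_mul_of_nonneg_left hab (le_of_lt hm0))
  have hgstrict : ∀ r ∈ S, ∀ s ∈ S, r < s → g r < g s := by
    intro r hr s hs hrs
    have h1 := hgap r hr s hs hrs
    have h2 := Int.ceil_lt_add_one ((m : ℝ) * r)
    have h3 := Int.le_ceil ((m : ℝ) * s)
    simp only [hgdef]
    linarith
  set w' : E → WithBot ℝ := fun x => (w x).map g with hw'def
  have hmapmono : Monotone (WithBot.map g) := hgmono.withBot_map
  have hw'eq : ∀ x : E, ∀ r : ℝ, w x = (r : WithBot ℝ) → w' x = ((g r : ℝ) : WithBot ℝ) := by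
    intro x r hr
    rw [hw'def]
    simp only [hr, WithBot.map_coe]
  refine ⟨m, hmpos, w', ⟨?_, ?_, ?_⟩, ?_, ?_⟩
  · intro x
    rw [hw'def]
    simp only [WithBot.map_eq_bot_iff]
    exact hw.1 x
  · intro t x ht
    simp only [hw'def, hw.2.1 t x ht]
  · intro x y
    calc (w (x + y)).map g ≤ (max (w x) (w y)).map g := hmapmono (hw.2.2 x y)
      _ = max ((w x).map g) ((w y).map g) := hmapmono.map_max
  · intro x y hx hy
    obtain ⟨r, hrx, hrS, _⟩ := hval x hx
    obtain ⟨s, hsy, hsS, _⟩ := hval y hy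
    rw [hrx, hsy, hw'eq x r hrx, hw'eq y s hsy, WithBot.coe_le_coe, WithBot.coe_le_coe]
    constructor
    · exact fun h => hgmono h
    · intro h
      by_contra h'
      push_neg at h'
      exact absurd h (not_le.2 (hgstrict s hsS r hrS h'))
  · intro x hx
    obtain ⟨r, hrx, hrS, hr0⟩ := hval x hx
    refine ⟨r, ⌈(m : ℝ) * r⌉, hrx, hw'eq x r hrx, Int.le_ceil _, ?_⟩
    rcases eq_or_lt_of_le hr0 with h | h
    · rw [← h]
      simp
    · have h1 := hposS r hrS h
      have h2 := Int.ceil_lt_add_one ((m : ℝ) * r)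
      nlinarith
end
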